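/- There exist absolute constants k₀ > 0 and k > 0 such that the following holds. Fix N ≥ 2, an N-ary tree V of depth L ≥ 1, and radially decaying weights with parameter ε ≤ k₀/N. Then for any two disjoint clusters C, C' ∈ 𝒞₀, dist(C, C') ≥ k·N^{−1}·(W_{π(C)} + W_{π(C')}). -/

import Mathlib

open MeasureTheory Set Metric
open scoped Classical

noncomputable section

abbrev Pt : Type := EuclideanSpace ℝ (Fin 2)

/-- The point `(a, b)` of the Euclidean plane. -/
def pt (a b : ℝ) : Pt := WithLp.toLp 2 ![a, b]

/-- `V` is an `N`-ary tree: a finite prefix-closed set of strings over the alphabet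
`{0, …, N−1}` containing the empty string (the root), in which every non-leaf node
has at least `2` (and, automatically, at most `N`) children. -/
def IsNaryTree (N : ℕ) (V : Finset (List ℕ)) : Prop :=
  [] ∈ V ∧
  (∀ v ∈ V, ∀ u : List ℕ, u <+: v → u ∈ V) ∧
  (∀ v ∈ V, ∀ i ∈ v, i < N) ∧
  (∀ v ∈ V, (∃ a : ℕ, v ++ [a] ∈ V) →
    2 ≤ ((Finset.range N).filter (fun a => v ++ [a] ∈ V)).card)

/-- `v` is a leaf of `V`. -/
def IsLeaf (V : Finset (List ℕ)) (v : List ℕ) : Prop :=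
  v ∈ V ∧ ∀ a : ℕ, v ++ [a] ∉ V

/-- The tree has depth at least one, i.e. the root is not a leaf. -/
def DepthAtLeastOne (V : Finset (List ℕ)) : Prop := ∃ a : ℕ, [a] ∈ V

/-- Radially decaying weights with parameter `ε` (with the convention `W ∅ = 1`). -/
def RadiallyDecaying (V : Finset (List ℕ)) (W : List ℕ → ℝ) (ε : ℝ) : Prop :=
  W [] = 1 ∧ (∀ v ∈ V, 0 < W v) ∧ ∀ v ∈ V, v ≠ [] → W v ≤ ε * W v.dropLast

/-- The map `Ψ(v) = ∑_{i=1}^{d(v)} W(π_{i−1}(v))·v_i/(N−1)`. -/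
def Psi (N : ℕ) (W : List ℕ → ℝ) (v : List ℕ) : ℝ :=
  ∑ i ∈ Finset.range v.length, W (v.take i) * (v.getD i 0 : ℝ) / ((N : ℝ) - 1)

/-- `Δ = min_{v ∈ ∂V} W_v`. -/
def Delta (V : Finset (List ℕ)) (W : List ℕ → ℝ) : ℝ :=
  sInf {w : ℝ | ∃ v, IsLeaf V v ∧ w = W v}

def E1set (Δ : ℝ) : Set Pt :=
  {x | (∃ n : ℤ, x 0 = (n : ℝ) * Δ) ∧ x 0 ∈ Ico (0 : ℝ) 2 ∧ x 1 = 0}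

def E2set (N : ℕ) (V : Finset (List ℕ)) (W : List ℕ → ℝ) : Set Pt :=
  {x | ∃ v, IsLeaf V v ∧ x = pt (Psi N W v) (W v)}

def Eset (N : ℕ) (V : Finset (List ℕ)) (W : List ℕ → ℝ) : Set Pt :=
  E1set (Delta V W) ∪ E2set N V W

/-- Bundle of standing hypotheses: `N ≥ 2`, `V` an `N`-ary tree, `0 < ε ≤ k₀/N`,
and radially decaying weights with parameter `ε`. -/
def TreeHyp (k₀ : ℝ) (N : ℕ) (V : Finset (List ℕ)) (W : List ℕ → ℝ) (ε : ℝ) : Prop :=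
  2 ≤ N ∧ IsNaryTree N V ∧ 0 < ε ∧ ε ≤ k₀ / N ∧ RadiallyDecaying V W ε

/-- Distance between two subsets of the plane. -/
def setDist (s t : Set Pt) : ℝ := sInf {d : ℝ | ∃ x ∈ s, ∃ y ∈ t, d = dist x y}

/-- A dyadic square arising from `Q⁰ = [−3,5)²` by `k` repeated bisections. -/
structure DSquare where
  k : ℕ
  i : ℕ
  j : ℕ
  hi : i < 2 ^ k
  hj : j < 2 ^ k

namespace DSquare

def side (Q : DSquare) : ℝ := 8 / 2 ^ Q.k

def x0 (Q : DSquare) : ℝ := -3 + Q.i * Q.side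

def y0 (Q : DSquare) : ℝ := -3 + Q.j * Q.side

/-- The (half-open) square itself, as a subset of the plane. -/
def set (Q : DSquare) : Set Pt :=
  {x | x 0 ∈ Ico Q.x0 (Q.x0 + Q.side) ∧ x 1 ∈ Ico Q.y0 (Q.y0 + Q.side)}

/-- The concentric dilate `λQ`. -/
def dil (Q : DSquare) (lam : ℝ) : Set Pt :=
  {x | |x 0 - (Q.x0 + Q.side / 2)| ≤ lam * Q.side / 2 ∧
       |x 1 - (Q.y0 + Q.side / 2)| ≤ lam * Q.side / 2}

/-- The dyadic ancestor of `Q` at generation `k' ≤ Q.k`. -/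
def anc (Q : DSquare) (k' : ℕ) (h : k' ≤ Q.k) : DSquare :=
  ⟨k', Q.i / 2 ^ (Q.k - k'), Q.j / 2 ^ (Q.k - k'), by
      have h2 : 0 < 2 ^ (Q.k - k') := pow_pos (by norm_num) _
      rw [Nat.div_lt_iff_lt_mul h2, ← pow_add, Nat.add_sub_cancel' h]
      exact Q.hi, by
      have h2 : 0 < 2 ^ (Q.k - k') := pow_pos (by norm_num) _
      rw [Nat.div_lt_iff_lt_mul h2, ← pow_add, Nat.add_sub_cancel' h]
      exact Q.hj⟩

end DSquare

def Q0set : Set Pt := {x | x 0 ∈ Ico (-3 : ℝ) 5 ∧ x 1 ∈ Ico (-3 : ℝ) 5}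

/-- `Q` belongs to the Whitney decomposition `𝒲` of `Q⁰` relative to `E`:
`3Q ∩ E` has at most one point, while `3Q'' ∩ E` has at least two points for every
proper dyadic ancestor `Q''` of `Q`. -/
def InWhitney (E : Set Pt) (Q : DSquare) : Prop :=
  (Q.dil 3 ∩ E).Subsingleton ∧
  ∀ k' : ℕ, ∀ h : k' < Q.k, ¬ ((Q.anc k' h.le).dil 3 ∩ E).Subsingleton

/-- `Q ↔ Q'`, i.e. `1.1Q ∩ 1.1Q' ≠ ∅`. -/
def Touch (Q Q' : DSquare) : Prop := (Q.dil 1.1 ∩ Q'.dil 1.1).Nonempty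

/-- `‖F‖_{L^{2,p}(Ω)}^p = ∫_Ω |∇²F|^p`. -/
def sobEnergy (p : ℝ) (Ω : Set Pt) (F : Pt → ℝ) : ℝ :=
  ∫ x in Ω, ‖iteratedFDeriv ℝ 2 F x‖ ^ p

/-- The seminorm `‖F‖_{L^{2,p}(Ω)}`. -/
def sobNorm (p : ℝ) (Ω : Set Pt) (F : Pt → ℝ) : ℝ := sobEnergy p Ω F ^ (1 / p)

/-- Membership in the homogeneous Sobolev space `L^{2,p}(ℝ²)` (we work with `C²`
representatives with finite seminorm). -/
def MemSob (p : ℝ) (F : Pt → ℝ) : Prop :=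
  ContDiff ℝ 2 F ∧ Integrable fun x => ‖iteratedFDeriv ℝ 2 F x‖ ^ p

/-- The trace seminorm `‖f‖_{L^{2,p}(E)}` of `f : E → ℝ`. -/
def traceSobNorm (p : ℝ) (E : Set Pt) (f : E → ℝ) : ℝ :=
  sInf {c : ℝ | ∃ F : Pt → ℝ, MemSob p F ∧ (∀ y : E, F y.1 = f y) ∧ c = sobNorm p univ F}

/-- `T` is a linear extension operator `L^{2,p}(E) → L^{2,p}(ℝ²)` with norm bound `M`. -/
def IsExtOpPlane (p : ℝ) (E : Set Pt) (M : ℝ) (T : (E → ℝ) →ₗ[ℝ] (Pt → ℝ)) : Prop :=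
  ∀ f : E → ℝ, (∃ F : Pt → ℝ, MemSob p F ∧ ∀ y : E, F y.1 = f y) →
    MemSob p (T f) ∧ (∀ y : E, T f y.1 = f y) ∧
      sobNorm p univ (T f) ≤ M * traceSobNorm p E f

/-- `‖Φ‖_{L^{1,p}(V)}^p = ∑_{v ∈ V₀} |Φ(v) − Φ(π(v))|^p W_v^{2−p}`. -/
def treeEnergy (p : ℝ) (V : Finset (List ℕ)) (W : List ℕ → ℝ) (Φ : List ℕ → ℝ) : ℝ :=
  ∑ v ∈ V.erase [], |Φ v - Φ v.dropLast| ^ p * W v ^ (2 - p)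

def treeNorm (p : ℝ) (V : Finset (List ℕ)) (W : List ℕ → ℝ) (Φ : List ℕ → ℝ) : ℝ :=
  treeEnergy p V W Φ ^ (1 / p)

/-- The type of leaves of `V`. -/
def Leaves (V : Finset (List ℕ)) : Type := {v : List ℕ // IsLeaf V v}

/-- The trace seminorm `‖φ‖_{L^{1,p}(∂V)}`. -/
def treeTraceNorm (p : ℝ) (V : Finset (List ℕ)) (W : List ℕ → ℝ) (φ : Leaves V → ℝ) : ℝ :=
  sInf {c : ℝ | ∃ Φ : List ℕ → ℝ, (∀ v : Leaves V, Φ v.1 = φ v) ∧ c = treeNorm p V W Φ}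

/-- `H` is a linear extension operator `L^{1,p}(∂V) → L^{1,p}(V)` with norm bound `M`. -/
def IsExtOpTree (p : ℝ) (V : Finset (List ℕ)) (W : List ℕ → ℝ) (M : ℝ)
    (H : (Leaves V → ℝ) →ₗ[ℝ] (List ℕ → ℝ)) : Prop :=
  ∀ φ : Leaves V → ℝ,
    (∀ v : Leaves V, H φ v.1 = φ v) ∧ treeNorm p V W (H φ) ≤ M * treeTraceNorm p V W φ

/-- Longest common prefix of two strings (the lowest common ancestor). -/
def lcp : List ℕ → List ℕ → List ℕ
  | a :: as, b :: bs => if a = b then a :: lcp as bs else []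
  | _, _ => []

/-- The cluster `C_v ⊆ E₂` associated to a vertex `v ∈ V`. -/
def Cluster (N : ℕ) (V : Finset (List ℕ)) (W : List ℕ → ℝ) (v : List ℕ) : Set Pt :=
  {x | ∃ u, IsLeaf V u ∧ v <+: u ∧ x = pt (Psi N W u) (W u)}

/-- The average `(∂₂G)_S` of the vertical derivative of `G` over `S`. -/
def d2avg (S : Set Pt) (G : Pt → ℝ) : ℝ :=
  ⨍ x in S, fderiv ℝ G x (EuclideanSpace.single 1 1)

end

/-!
Two disjoint clusters `C_v`, `C_{v'}` come from vertices neither of which is a prefix of the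
other, so `v` and `v'` pass through distinct children `w ++ [a]`, `w ++ [b]` of a common
ancestor `w`. For leaves below them, the first coordinates `Ψ` already differ by at least
`W_w / (N - 1)` at level `|w| + 1`, whereas all deeper levels together move `Ψ` by at most
`2 ε W_w`, the weights decaying geometrically. For `ε ≤ 1 / (4N)` the horizontal gap is thus at
least `W_w / (2N)`, and `W_w` dominates the weights of both parents `π(v)`, `π(v')`.
-/

@[elab_as_elim]
theorem List.IsPrefix.induction_append_singleton {α : Type*} {w : List α}
    {P : List α → Prop} (base : P w) (step : ∀ l x, w <+: l → P l → P (l ++ [x]))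
    {u : List α} (h : w <+: u) : P u := by
  obtain ⟨t, rfl⟩ := h
  induction t using List.reverseRecOn with
  | nil => simpa using base
  | append_singleton t x ih =>
    rw [← List.append_assoc]
    exact step _ x (List.prefix_append w t) ih

theorem List.IsPrefix.prefix_dropLast_of_append_singleton {α : Type*} {w v : List α} {a : α}
    (h : w ++ [a] <+: v) : w <+: v.dropLast := by
  obtain ⟨r, rfl⟩ := h
  rw [List.append_assoc, List.dropLast_append_of_ne_nil (by simp)]
  exact List.prefix_append _ _

theorem exists_isLeaf_prefix (V : Finset (List ℕ)) {v : List ℕ} (hv : v ∈ V) :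
    ∃ u, IsLeaf V u ∧ v <+: u := by
  obtain ⟨u, hu, hmax⟩ := Finset.exists_max_image (V.filter (v <+: ·))
    List.length ⟨v, Finset.mem_filter.mpr ⟨hv, List.prefix_rfl⟩⟩
  rw [Finset.mem_filter] at hu
  refine ⟨u, ⟨hu.1, fun a ha => ?_⟩, hu.2⟩
  have := hmax (u ++ [a]) (Finset.mem_filter.mpr ⟨ha, hu.2.trans (List.prefix_append u [a])⟩)
  simp at this

theorem exists_append_singleton_prefix_of_not_prefix :
    ∀ {v v' : List ℕ}, ¬ v <+: v' → ¬ v' <+: v →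
      ∃ w a b, a ≠ b ∧ w ++ [a] <+: v ∧ w ++ [b] <+: v'
  | [], _, h, _ => absurd List.nil_prefix h
  | _ :: _, [], _, h' => absurd List.nil_prefix h'
  | x :: xs, y :: ys, h, h' => by
    by_cases hxy : x = y
    · subst hxy
      obtain ⟨w, a, b, hab, hwa, hwb⟩ := exists_append_singleton_prefix_of_not_prefix
        (fun hp => h (List.cons_prefix_cons.mpr ⟨rfl, hp⟩))
        (fun hp => h' (List.cons_prefix_cons.mpr ⟨rfl, hp⟩))
      exact ⟨x :: w, a, b, hab, List.cons_prefix_cons.mpr ⟨rfl, hwa⟩,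
        List.cons_prefix_cons.mpr ⟨rfl, hwb⟩⟩
    · exact ⟨[], x, y, hxy, List.cons_prefix_cons.mpr ⟨rfl, List.nil_prefix⟩,
        List.cons_prefix_cons.mpr ⟨rfl, List.nil_prefix⟩⟩

theorem Psi_append_singleton (N : ℕ) (W : List ℕ → ℝ) (l : List ℕ) (x : ℕ) :
    Psi N W (l ++ [x]) = Psi N W l + W l * x / ((N : ℝ) - 1) := by
  unfold Psi
  rw [List.length_append, List.length_singleton, Finset.sum_range_succ]
  congr 1
  · refine Finset.sum_congr rfl fun i hi => ?_
    rw [Finset.mem_range] at hi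
    rw [List.take_append_of_le_length hi.le, List.getD_append _ _ _ _ hi]
  · simp

theorem abs_sub_le_dist_pt (a b a' b' : ℝ) : |a - a'| ≤ dist (pt a b) (pt a' b') := by
  simpa [pt, Real.dist_eq] using PiLp.dist_apply_le (pt a b) (pt a' b') 0

theorem le_setDist {s t : Set Pt} {c : ℝ} (hs : s.Nonempty) (ht : t.Nonempty)
    (h : ∀ x ∈ s, ∀ y ∈ t, c ≤ dist x y) : c ≤ setDist s t := by
  obtain ⟨x, hx⟩ := hs
  obtain ⟨y, hy⟩ := ht
  refine le_csInf ⟨_, x, hx, y, hy, rfl⟩ ?_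
  rintro _ ⟨x, hx, y, hy, rfl⟩
  exact h x hx y hy

section Tree

variable {N : ℕ} {V : Finset (List ℕ)} {W : List ℕ → ℝ} {ε : ℝ}

theorem IsNaryTree.mem_of_prefix (hV : IsNaryTree N V) {u v : List ℕ} (hv : v ∈ V)
    (huv : u <+: v) : u ∈ V :=
  hV.2.1 v hv u huv

theorem IsNaryTree.cast_le_sub_one (hV : IsNaryTree N V) {v : List ℕ} (hv : v ∈ V)
    {x : ℕ} (hx : x ∈ v) : (x : ℝ) ≤ N - 1 := by
  have hxN : x + 1 ≤ N := hV.2.2.1 v hv x hx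
  have hxN' : (x : ℝ) + 1 ≤ N := by exact_mod_cast hxN
  linarith

theorem IsNaryTree.weight_mul_digit_div_mem_Icc (hV : IsNaryTree N V) {l : List ℕ} {x : ℕ}
    (h : l ++ [x] ∈ V) {c : ℝ} (hc : 0 ≤ c) : c * x / ((N : ℝ) - 1) ∈ Icc 0 c := by
  have hx : (x : ℝ) ≤ N - 1 := hV.cast_le_sub_one h (by simp)
  have hx0 : (0 : ℝ) ≤ x := Nat.cast_nonneg x
  rw [mul_div_assoc]
  exact ⟨mul_nonneg hc (div_nonneg hx0 (hx0.trans hx)),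
    mul_le_of_le_one_right hc (div_le_one_of_le₀ hx (hx0.trans hx))⟩

theorem RadiallyDecaying.le_mul_of_append_singleton (hW : RadiallyDecaying V W ε)
    {l : List ℕ} {x : ℕ} (h : l ++ [x] ∈ V) : W (l ++ [x]) ≤ ε * W l := by
  simpa using hW.2.2 _ h (by simp)

theorem RadiallyDecaying.weight_anti (hV : IsNaryTree N V) (hW : RadiallyDecaying V W ε)
    (hε : ε ≤ 1) {w u : List ℕ} (hwu : w <+: u) (hu : u ∈ V) : W u ≤ W w := by
  revert hu
  refine hwu.induction_append_singleton (fun _ => le_rfl) fun l x _ ih hu => ?_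
  have hl : l ∈ V := hV.mem_of_prefix hu (List.prefix_append l [x])
  calc W (l ++ [x]) ≤ ε * W l := hW.le_mul_of_append_singleton hu
    _ ≤ 1 * W l := by gcongr; exact (hW.2.1 l hl).le
    _ ≤ W w := by rw [one_mul]; exact ih hl

theorem IsNaryTree.Psi_mono (hV : IsNaryTree N V) (hW : RadiallyDecaying V W ε)
    {w u : List ℕ} (hwu : w <+: u) (hu : u ∈ V) : Psi N W w ≤ Psi N W u := by
  revert hu
  refine hwu.induction_append_singleton (fun _ => le_rfl) fun l x _ ih hu => ?_
  have hl : l ∈ V := hV.mem_of_prefix hu (List.prefix_append l [x])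
  have hstep := hV.weight_mul_digit_div_mem_Icc hu (hW.2.1 l hl).le
  rw [Psi_append_singleton]
  linarith [ih hl, hstep.1]

/-- Passing from `l` to a child adds at most `W l` to `Ψ`, and `2 W (l ++ [x]) ≤ 2ε W l ≤ W l`
pays for it, so `Ψ + 2W` does not increase down the tree. -/
theorem IsNaryTree.Psi_add_two_mul_weight_le (hV : IsNaryTree N V)
    (hW : RadiallyDecaying V W ε) (hε : ε ≤ 1 / 2) {w u : List ℕ} (hwu : w <+: u)
    (hu : u ∈ V) : Psi N W u + 2 * W u ≤ Psi N W w + 2 * W w := by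
  revert hu
  refine hwu.induction_append_singleton (fun _ => le_rfl) fun l x _ ih hu => ?_
  have hl : l ∈ V := hV.mem_of_prefix hu (List.prefix_append l [x])
  have hWl : 0 < W l := hW.2.1 l hl
  have hstep := hV.weight_mul_digit_div_mem_Icc hu hWl.le
  have hdecay := hW.le_mul_of_append_singleton hu
  rw [Psi_append_singleton]
  nlinarith [ih hl, hstep.2]

theorem IsNaryTree.Psi_sub_Psi_append_singleton_mem_Icc (hV : IsNaryTree N V)
    (hW : RadiallyDecaying V W ε) (hε : ε ≤ 1 / 2) {w u : List ℕ} {a : ℕ}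
    (hwa : w ++ [a] <+: u) (hu : u ∈ V) :
    Psi N W u - Psi N W (w ++ [a]) ∈ Icc 0 (2 * ε * W w) := by
  have := hV.Psi_add_two_mul_weight_le hW hε hwa hu
  have := hV.Psi_mono hW hwa hu
  have := hW.le_mul_of_append_singleton (hV.mem_of_prefix hu hwa)
  have := hW.2.1 u hu
  constructor <;> linarith

theorem IsNaryTree.le_abs_Psi_append_singleton_sub (hV : IsNaryTree N V)
    (hW : RadiallyDecaying V W ε) {w : List ℕ} {a b : ℕ} (hab : a ≠ b) (ha : w ++ [a] ∈ V) :
    W w / ((N : ℝ) - 1) ≤ |Psi N W (w ++ [a]) - Psi N W (w ++ [b])| := by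
  have hWw : 0 < W w := hW.2.1 w (hV.mem_of_prefix ha (List.prefix_append w [a]))
  have hN : (0 : ℝ) ≤ N - 1 := (Nat.cast_nonneg a).trans (hV.cast_le_sub_one ha (by simp))
  have hab' : (1 : ℝ) ≤ |(a : ℝ) - b| := by
    have : (1 : ℤ) ≤ |(a : ℤ) - b| := Int.one_le_abs (sub_ne_zero.mpr (by exact_mod_cast hab))
    exact_mod_cast this
  rw [Psi_append_singleton, Psi_append_singleton,
    show ∀ p r : ℝ, p + W w * a / r - (p + W w * b / r) = (a - b) * (W w / r) by
      intros; ring,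
    abs_mul, abs_of_nonneg (div_nonneg hWw.le hN)]
  exact le_mul_of_one_le_left (div_nonneg hWw.le hN) hab'

theorem IsNaryTree.sub_le_abs_Psi_sub_Psi (hV : IsNaryTree N V)
    (hW : RadiallyDecaying V W ε) (hε : ε ≤ 1 / 2) {w u u' : List ℕ} {a b : ℕ} (hab : a ≠ b)
    (hwa : w ++ [a] <+: u) (hwb : w ++ [b] <+: u') (hu : u ∈ V) (hu' : u' ∈ V) :
    W w / ((N : ℝ) - 1) - 2 * ε * W w ≤ |Psi N W u - Psi N W u'| := by
  have hgap := hV.le_abs_Psi_append_singleton_sub hW (b := b) hab (hV.mem_of_prefix hu hwa)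
  obtain ⟨hp0, hp1⟩ := hV.Psi_sub_Psi_append_singleton_mem_Icc hW hε hwa hu
  obtain ⟨hq0, hq1⟩ := hV.Psi_sub_Psi_append_singleton_mem_Icc hW hε hwb hu'
  have htri := abs_sub (Psi N W u - Psi N W u')
    ((Psi N W u - Psi N W (w ++ [a])) - (Psi N W u' - Psi N W (w ++ [b])))
  rw [show ∀ p q r s : ℝ, p - q - (p - r - (q - s)) = r - s by intros; ring] at htri
  have htails : |(Psi N W u - Psi N W (w ++ [a])) - (Psi N W u' - Psi N W (w ++ [b]))|
      ≤ 2 * ε * W w := abs_sub_le_iff.mpr ⟨by linarith, by linarith⟩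
  linarith

end Tree

theorem Cluster_nonempty (N : ℕ) {V : Finset (List ℕ)} (W : List ℕ → ℝ) {v : List ℕ}
    (hv : v ∈ V) : (Cluster N V W v).Nonempty :=
  let ⟨u, hu, hvu⟩ := exists_isLeaf_prefix V hv
  ⟨_, u, hu, hvu, rfl⟩

theorem Cluster_anti (N : ℕ) (V : Finset (List ℕ)) (W : List ℕ → ℝ) {v v' : List ℕ}
    (h : v <+: v') : Cluster N V W v' ⊆ Cluster N V W v := by
  rintro _ ⟨u, hu, hvu, rfl⟩
  exact ⟨u, hu, h.trans hvu, rfl⟩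

theorem not_prefix_of_disjoint_Cluster {N : ℕ} {V : Finset (List ℕ)} {W : List ℕ → ℝ}
    {v v' : List ℕ} (hv' : v' ∈ V) (h : Disjoint (Cluster N V W v) (Cluster N V W v')) :
    ¬ v <+: v' := fun hp =>
  (Cluster_nonempty N W hv').ne_empty (disjoint_self.mp (h.mono_left (Cluster_anti N V W hp)))

theorem quarter_mul_inv_mul_add_le {n ε c x y : ℝ} (hn : 2 ≤ n) (hε : ε ≤ 1 / 4 / n)
    (hc : 0 ≤ c) (hx : x ≤ c) (hy : y ≤ c) :
    1 / 4 * n⁻¹ * (x + y) ≤ c / (n - 1) - 2 * ε * c := by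
  have hεn : ε * n ≤ 1 / 4 := (le_div_iff₀ (by positivity)).mp hε
  have h2 : 2 * ε * c * n ≤ c / 2 := by nlinarith
  rw [le_sub_iff_add_le]
  calc 1 / 4 * n⁻¹ * (x + y) + 2 * ε * c = ((x + y) / 4 + 2 * ε * c * n) / n := by
        field_simp
    _ ≤ c / n := by gcongr; linarith
    _ ≤ c / (n - 1) := div_le_div_of_nonneg_left hc (by linarith) (by linarith)

/-- lower bound for the distance between disjoint clusters. -/
theorem statement12 :
    ∃ k₀ k : ℝ, 0 < k₀ ∧ 0 < k ∧
      ∀ (N : ℕ) (V : Finset (List ℕ)) (W : List ℕ → ℝ) (ε : ℝ),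
        TreeHyp k₀ N V W ε → DepthAtLeastOne V →
          ∀ v ∈ V, v ≠ [] → ∀ v' ∈ V, v' ≠ [] →
            Disjoint (Cluster N V W v) (Cluster N V W v') →
              k * (N : ℝ)⁻¹ * (W v.dropLast + W v'.dropLast) ≤
                setDist (Cluster N V W v) (Cluster N V W v') := by
  refine ⟨1 / 4, 1 / 4, by norm_num, by norm_num, ?_⟩
  rintro N V W ε ⟨hN, hV, -, hεN, hW⟩ - v hv - v' hv' - hdisj
  have hN' : (2 : ℝ) ≤ N := by exact_mod_cast hN
  have hε : ε ≤ 1 / 2 :=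
    hεN.trans ((div_le_div_of_nonneg_left (by norm_num) (by norm_num) hN').trans (by norm_num))
  obtain ⟨w, a, b, hab, hwa, hwb⟩ := exists_append_singleton_prefix_of_not_prefix
    (not_prefix_of_disjoint_Cluster hv' hdisj) (not_prefix_of_disjoint_Cluster hv hdisj.symm)
  have hWw : 0 < W w := hW.2.1 w (hV.mem_of_prefix hv ((List.prefix_append w [a]).trans hwa))
  have hWv := hW.weight_anti hV (by linarith) hwa.prefix_dropLast_of_append_singleton
    (hV.mem_of_prefix hv (List.dropLast_prefix v))
  have hWv' := hW.weight_anti hV (by linarith) hwb.prefix_dropLast_of_append_singleton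
    (hV.mem_of_prefix hv' (List.dropLast_prefix v'))
  refine le_setDist (Cluster_nonempty N W hv) (Cluster_nonempty N W hv') ?_
  rintro _ ⟨u, hu, hvu, rfl⟩ _ ⟨u', hu', hvu', rfl⟩
  calc 1 / 4 * (N : ℝ)⁻¹ * (W v.dropLast + W v'.dropLast)
      ≤ W w / ((N : ℝ) - 1) - 2 * ε * W w := quarter_mul_inv_mul_add_le hN' hεN hWw.le hWv hWv'
    _ ≤ |Psi N W u - Psi N W u'| :=
        hV.sub_le_abs_Psi_sub_Psi hW hε hab (hwa.trans hvu) (hwb.trans hvu') hu.1 hu'.1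
    _ ≤ _ := abs_sub_le_dist_pt _ _ _ _
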